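/- Let K ⊆ ℤ^n be a subgroup and T ⊆ ℤ_{≥0}^n a set satisfying property (i) (if a, b ∈ ℤ_{≥0}^n with a − b ∈ ℤ_{≥0}^n and a ∈ T, then b ∈ T) and property (ii) (for T_q := {a ∈ T | a mod K = q}: for all g ∈ ℤ_{≥0}^n and q ∈ ℤ^n/K, either (g + T_q) ∩ T = ∅ or g + T_q ⊆ T). Then for every ℓ ⊆ {1,…,n} and every q ∈ ℤ^n/K: if the fiber of the closure T̄(ℓ) over q is nonempty, then it equals T_q. In particular, T̄(ℓ) is a union of whole fibers T_q. -/

import Mathlib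

open MvPolynomial

def vsupp {n : ℕ} (a : Fin n → ℕ) : Set (Fin n) := {i | a i ≠ 0}

def vcell {n : ℕ} (l : Set (Fin n)) : Set (Fin n → ℕ) := {a | vsupp a ⊆ l}

def vslice {n : ℕ} (r : Fin n → ℕ) (l : Set (Fin n)) : Set (Fin n → ℕ) :=
  (fun a => r + a) '' vcell l

def IsStdPair {n : ℕ} (T : Set (Fin n → ℕ)) (r : Fin n → ℕ) (l : Set (Fin n)) : Prop :=
  Disjoint (vsupp r) l ∧ vslice r l ⊆ T ∧
    ∀ (r' : Fin n → ℕ) (l' : Set (Fin n)), Disjoint (vsupp r') l' → vslice r' l' ⊆ T →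
      vslice r l ⊆ vslice r' l' → vslice r l = vslice r' l'

def DownClosed {n : ℕ} (T : Set (Fin n → ℕ)) : Prop :=
  ∀ a b : Fin n → ℕ, (∀ i, b i ≤ a i) → a ∈ T → b ∈ T

def vtoZ {n : ℕ} (a : Fin n → ℕ) : Fin n → ℤ := fun i => (a i : ℤ)

def fiber {n : ℕ} (K : AddSubgroup (Fin n → ℤ)) (S : Set (Fin n → ℕ))
    (q : (Fin n → ℤ) ⧸ K) : Set (Fin n → ℕ) :=
  {a ∈ S | (QuotientAddGroup.mk (vtoZ a) : (Fin n → ℤ) ⧸ K) = q}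

def PropII {n : ℕ} (K : AddSubgroup (Fin n → ℤ)) (T : Set (Fin n → ℕ)) : Prop :=
  ∀ (g : Fin n → ℕ) (q : (Fin n → ℤ) ⧸ K),
    ((fun a => g + a) '' fiber K T q) ∩ T = ∅ ∨ ((fun a => g + a) '' fiber K T q) ⊆ T

noncomputable def xmono {n : ℕ} (a : Fin n → ℕ) : MvPolynomial (Fin n) ℂ :=
  monomial (Finsupp.equivFunOnFinite.symm a) 1

def TofI {n : ℕ} (I : Ideal (MvPolynomial (Fin n) ℂ)) : Set (Fin n → ℕ) :=
  {a | xmono a ∉ I}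

def IsBinomialIdeal {n : ℕ} (I : Ideal (MvPolynomial (Fin n) ℂ)) : Prop :=
  ∃ S : Set (MvPolynomial (Fin n) ℂ), I = Ideal.span S ∧
    ∀ f ∈ S, ∃ (a b : Fin n → ℕ) (la lb : ℂ), f = la • xmono a - lb • xmono b

def KofI {n : ℕ} (I : Ideal (MvPolynomial (Fin n) ℂ)) : AddSubgroup (Fin n → ℤ) :=
  AddSubgroup.closure {v | ∃ a ∈ TofI I, ∃ b ∈ TofI I,
    (∃ la lb : ℂ, la ≠ 0 ∧ lb ≠ 0 ∧ la • xmono a - lb • xmono b ∈ I) ∧ v = vtoZ a - vtoZ b}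

def IsSaturated {n : ℕ} (I : Ideal (MvPolynomial (Fin n) ℂ)) : Prop :=
  IsBinomialIdeal I ∧ ∀ a ∈ TofI I, ∀ b ∈ TofI I, vtoZ a - vtoZ b ∈ KofI I →
    ∃ la lb : ℂ, la ≠ 0 ∧ lb ≠ 0 ∧ la • xmono a - lb • xmono b ∈ I

def Tl {n : ℕ} (T : Set (Fin n → ℕ)) (l : Set (Fin n)) : Set (Fin n → ℕ) :=
  {a | ∃ r, IsStdPair T r l ∧ a ∈ vslice r l}

def Tlbar {n : ℕ} (T : Set (Fin n → ℕ)) (l : Set (Fin n)) : Set (Fin n → ℕ) :=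
  {a | ∃ r r', (∀ i, r i ≤ r' i) ∧ IsStdPair T r' l ∧ a ∈ vslice r l}

def IsMonomialIdeal {n : ℕ} (I : Ideal (MvPolynomial (Fin n) ℂ)) : Prop :=
  ∃ S : Set (Fin n → ℕ), I = Ideal.span (xmono '' S)

def wdeg {n d : ℕ} (M : Matrix (Fin d) (Fin n) ℤ) (m : Fin n →₀ ℕ) : Fin d → ℤ :=
  M.mulVec fun i => (m i : ℤ)

noncomputable def homogComp {n d : ℕ} (M : Matrix (Fin d) (Fin n) ℤ) (q : Fin d → ℤ)
    (f : MvPolynomial (Fin n) ℂ) : MvPolynomial (Fin n) ℂ :=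
  ∑ m ∈ f.support, if wdeg M m = q then monomial m (f.coeff m) else 0

noncomputable def degPart {n d : ℕ} (M : Matrix (Fin d) (Fin n) ℤ)
    (I : Ideal (MvPolynomial (Fin n) ℂ)) (q : Fin d → ℤ) :
    Submodule ℂ (MvPolynomial (Fin n) ℂ ⧸ I) :=
  Submodule.span ℂ ((Ideal.Quotient.mk I) '' {f | ∀ m ∈ f.support, wdeg M m = q})

def IsAGraded {n d : ℕ} (M : Matrix (Fin d) (Fin n) ℤ)
    (I : Ideal (MvPolynomial (Fin n) ℂ)) : Prop :=
  (∀ f ∈ I, ∀ q : Fin d → ℤ, homogComp M q f ∈ I) ∧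
  ∀ q : Fin d → ℤ,
    (q ∈ Set.range (fun a : Fin n → ℕ => M.mulVec (vtoZ a)) →
      Module.finrank ℂ (degPart M I q) = 1) ∧
    (q ∉ Set.range (fun a : Fin n → ℕ => M.mulVec (vtoZ a)) →
      Module.finrank ℂ (degPart M I q) = 0)

noncomputable def htI {R : Type*} [CommRing R] (P : Ideal R) : ℕ∞ :=
  ⨆ (h : P.IsPrime), Order.height (⟨P, h⟩ : PrimeSpectrum R)

section Stmt4Aux

variable {n : ℕ}

lemma mem_vslice {r a : Fin n → ℕ} {l : Set (Fin n)} :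
    a ∈ vslice r l ↔ ∃ c : Fin n → ℕ, vsupp c ⊆ l ∧ r + c = a := Iff.rfl

lemma vsupp_subset_iff {c : Fin n → ℕ} {l : Set (Fin n)} :
    vsupp c ⊆ l ↔ ∀ i, i ∉ l → c i = 0 := by
  constructor
  · intro h i hil
    by_contra h0
    exact hil (h h0)
  · intro h i hi
    by_contra hil
    exact hi (h i hil)

lemma self_mem_vslice (β : Fin n → ℕ) (l : Set (Fin n)) : β ∈ vslice β l :=
  mem_vslice.mpr ⟨0, fun i hi => absurd rfl hi, add_zero β⟩

lemma mk_vtoZ_add (K : AddSubgroup (Fin n → ℤ)) (x g : Fin n → ℕ) :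
    (QuotientAddGroup.mk (vtoZ (x + g)) : (Fin n → ℤ) ⧸ K) =
      QuotientAddGroup.mk (vtoZ x) + QuotientAddGroup.mk (vtoZ g) := by
  have h : vtoZ (x + g) = vtoZ x + vtoZ g := by
    funext i
    simp [vtoZ]
  rw [h]
  rfl

lemma moveII {K : AddSubgroup (Fin n → ℤ)} {T : Set (Fin n → ℕ)} (h2 : PropII K T)
    {x y : Fin n → ℕ} (hx : x ∈ T) (hy : y ∈ T)
    (hxy : (QuotientAddGroup.mk (vtoZ x) : (Fin n → ℤ) ⧸ K) = QuotientAddGroup.mk (vtoZ y))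
    (g : Fin n → ℕ) (hxg : x + g ∈ T) : y + g ∈ T := by
  rcases h2 g (QuotientAddGroup.mk (vtoZ x)) with h | h
  · exfalso
    have hmem : g + x ∈ ((fun a => g + a) '' fiber K T (QuotientAddGroup.mk (vtoZ x))) ∩ T := by
      refine ⟨⟨x, ⟨hx, rfl⟩, rfl⟩, ?_⟩
      rwa [add_comm]
    rw [h] at hmem
    exact hmem
  · have hyf : y ∈ fiber K T (QuotientAddGroup.mk (vtoZ x)) := ⟨hy, hxy.symm⟩
    have := h ⟨y, hyf, rfl⟩
    rwa [add_comm]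

lemma exists_stdPair (T : Set (Fin n → ℕ)) {β : Fin n → ℕ} {l : Set (Fin n)}
    (hd : Disjoint (vsupp β) l) (hsub : vslice β l ⊆ T) :
    ∃ t L, IsStdPair T t L ∧ vslice β l ⊆ vslice t L := by
  classical
  set S : Set (Set (Fin n → ℕ)) :=
    {V | (∃ t L, Disjoint (vsupp t) L ∧ vslice t L ⊆ T ∧ V = vslice t L) ∧ vslice β l ⊆ V}
    with hSdef
  have hfin : S.Finite := by
    apply Set.Finite.subset (Set.Finite.image
      (f := fun p : (Fin n → ℕ) × Set (Fin n) => vslice p.1 p.2)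
      ((Set.finite_Icc 0 β).prod Set.finite_univ))
    rintro V ⟨⟨t, L, -, -, rfl⟩, hβ⟩
    have hβmem : β ∈ vslice t L := hβ (self_mem_vslice β l)
    obtain ⟨c, -, hc⟩ := mem_vslice.mp hβmem
    refine ⟨(t, L), ⟨Set.mem_Icc.mpr ⟨fun i => Nat.zero_le _, fun i => ?_⟩, Set.mem_univ _⟩, rfl⟩
    have := congrFun hc i
    simp only [Pi.add_apply] at this
    show t i ≤ β i
    omega
  have hne : S.Nonempty := ⟨vslice β l, ⟨β, l, hd, hsub, rfl⟩, subset_rfl⟩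
  obtain ⟨V, hV, hmax⟩ : ∃ V ∈ S, ∀ V' ∈ S, id V ≤ id V' → id V = id V' := by
    obtain ⟨V, hV, hm⟩ := hfin.exists_maximalFor id S hne
    exact ⟨V, hV, fun V' hV' hle => le_antisymm hle (hm hV' hle)⟩
  obtain ⟨⟨t, L, hdtL, hTtL, rfl⟩, hβV⟩ := hV
  refine ⟨t, L, ⟨hdtL, hTtL, ?_⟩, hβV⟩
  intro r₂ l₂ hd₂ hs₂ hsub₂
  exact hmax (vslice r₂ l₂) ⟨⟨r₂, l₂, hd₂, hs₂, rfl⟩, hβV.trans hsub₂⟩ hsub₂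

lemma subset_dirs {β t : Fin n → ℕ} {l L : Set (Fin n)}
    (h : vslice β l ⊆ vslice t L) : l ⊆ L := by
  classical
  intro i hi
  by_contra hiL
  have hmem : β + (fun k => if k = i then t i + 1 else 0) ∈ vslice t L := by
    apply h
    refine mem_vslice.mpr ⟨_, ?_, rfl⟩
    intro k hk
    have hk' : (fun k => if k = i then t i + 1 else 0) k ≠ 0 := hk
    by_cases hki : k = i
    · exact hki ▸ hi
    · simp [hki] at hk'
  obtain ⟨g, hg, hgeq⟩ := mem_vslice.mp hmem
  have hgi : g i = 0 := vsupp_subset_iff.mp hg i hiL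
  have := congrFun hgeq i
  simp [hgi] at this
  omega

lemma tlbar_key {K : AddSubgroup (Fin n → ℤ)} {T : Set (Fin n → ℕ)}
    (h1 : DownClosed T) (h2 : PropII K T) (l : Set (Fin n)) {a b : Fin n → ℕ}
    (ha : a ∈ Tlbar T l) (hb : b ∈ T)
    (hab : (QuotientAddGroup.mk (vtoZ a) : (Fin n → ℤ) ⧸ K) = QuotientAddGroup.mk (vtoZ b)) :
    b ∈ Tlbar T l := by
  classical
  obtain ⟨r, r', hrr', hstd, hmem⟩ := ha
  obtain ⟨c, hc, hac⟩ := mem_vslice.mp hmem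
  have hc0 : ∀ i, i ∉ l → c i = 0 := vsupp_subset_iff.mp hc
  have hr'0 : ∀ i ∈ l, r' i = 0 := by
    intro i hil
    by_contra h0
    exact Set.disjoint_left.mp hstd.1 h0 hil
  have haRle : ∀ i, i ∉ l → a i ≤ r' i := by
    intro i hil
    have := congrFun hac i
    simp only [Pi.add_apply, hc0 i hil] at this
    have := hrr' i
    omega
  -- a ∈ T
  have haT : a ∈ T := by
    have hmem' : r' + c ∈ T := hstd.2.1 (mem_vslice.mpr ⟨c, hc, rfl⟩)
    refine h1 (r' + c) a (fun i => ?_) hmem'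
    have := congrFun hac i
    simp only [Pi.add_apply] at this ⊢
    have := hrr' i
    omega
  -- the point a* := r' + (a restricted to l)
  set aL : Fin n → ℕ := fun i => if i ∈ l then a i else 0 with haL
  have haLsupp : vsupp aL ⊆ l := by
    intro i hi
    have hi' : aL i ≠ 0 := hi
    by_contra hil
    simp [haL, hil] at hi'
  have hastar : r' + aL ∈ T := hstd.2.1 (mem_vslice.mpr ⟨aL, haLsupp, rfl⟩)
  -- v := the vertical gap
  set v : Fin n → ℕ := fun i => if i ∈ l then 0 else r' i - a i with hv
  have hav : a + v = r' + aL := by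
    funext i
    by_cases hil : i ∈ l
    · simp [hv, haL, hil, hr'0 i hil]
    · have := haRle i hil
      simp only [Pi.add_apply, hv, haL, if_neg hil]
      omega
  -- classes
  have hq : (QuotientAddGroup.mk (vtoZ (a + v)) : (Fin n → ℤ) ⧸ K) =
      QuotientAddGroup.mk (vtoZ (b + v)) := by
    rw [mk_vtoZ_add, mk_vtoZ_add, hab]
  have hbstar : b + v ∈ T := by
    refine moveII h2 haT hb hab v ?_
    rw [hav]; exact hastar
  have hastarT : a + v ∈ T := by rw [hav]; exact hastar
  -- β := off-l part of b + v
  set β : Fin n → ℕ := fun i => if i ∈ l then 0 else (b + v) i with hβ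
  have hβle : ∀ i, β i ≤ (b + v) i := by
    intro i
    by_cases hil : i ∈ l <;> simp [hβ, hil]
  have hβd : Disjoint (vsupp β) l := by
    rw [Set.disjoint_left]
    intro i hi hil
    exact hi (by simp [hβ, hil])
  have hbvc : ∀ c' : Fin n → ℕ, vsupp c' ⊆ l → b + v + c' ∈ T := by
    intro c' hc'
    have hac' : a + v + c' ∈ T := by
      rw [hav]
      have : aL + c' ∈ vcell l := by
        intro i hi
        have hi' : (aL + c') i ≠ 0 := hi
        by_contra hil
        have h1' : aL i = 0 := by simp [haL, hil]
        have h2' : c' i = 0 := vsupp_subset_iff.mp hc' i hil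
        simp only [Pi.add_apply, h1', h2'] at hi'
        exact hi' rfl
      rw [add_assoc]
      exact hstd.2.1 ⟨aL + c', this, rfl⟩
    exact moveII h2 hastarT hbstar hq c' hac'
  have hβT : vslice β l ⊆ T := by
    rintro x ⟨c', hc', rfl⟩
    refine h1 (b + v + c') (β + c') (fun i => ?_) (hbvc c' hc')
    simp only [Pi.add_apply]
    exact Nat.add_le_add_right (hβle i) _
  obtain ⟨t, L, htL, hβtL⟩ := exists_stdPair T hβd hβT
  have hlL : l ⊆ L := subset_dirs hβtL
  obtain ⟨g₀, hg₀, hβeq⟩ := mem_vslice.mp (hβtL (self_mem_vslice β l))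
  by_cases hcase : ∀ j ∈ L, j ∈ l
  · -- L = l : we found the standard pair we need
    have hLl : L = l := Set.Subset.antisymm (fun j hj => hcase j hj) hlL
    rw [hLl] at htL hβtL
    have hg₀0 : ∀ i, i ∉ l → g₀ i = 0 := by
      rw [hLl] at hg₀
      exact vsupp_subset_iff.mp hg₀
    refine ⟨fun i => if i ∈ l then 0 else b i, t, fun i => ?_, htL, ?_⟩
    · by_cases hil : i ∈ l
      · simp [hil]
      · simp only [if_neg hil]
        have h1' := congrFun hβeq i
        simp only [Pi.add_apply, hβ, if_neg hil, hg₀0 i hil] at h1'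
        omega
    · refine mem_vslice.mpr ⟨fun i => if i ∈ l then b i else 0, ?_, ?_⟩
      · intro i hi
        have hi' : (fun i => if i ∈ l then b i else 0) i ≠ 0 := hi
        by_contra hil
        simp [hil] at hi'
      · funext i
        by_cases hil : i ∈ l <;> simp [hil]
  · push_neg at hcase
    obtain ⟨j, hjL, hjl⟩ := hcase
    exfalso
    set r'' : Fin n → ℕ := fun i => if i = j then 0 else r' i with hr''
    have hd'' : Disjoint (vsupp r'') (l ∪ {j}) := by
      rw [Set.disjoint_left]
      rintro i hi (hil | hij)
      · exact hi (by simp [hr'', hr'0 i hil])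
      · have : i = j := hij
        exact hi (by simp [hr'', this])
    have hsub'' : vslice r'' (l ∪ {j}) ⊆ T := by
      rintro x ⟨g, hg, rfl⟩
      have hgL : vsupp g ⊆ L := by
        intro i hi
        rcases hg hi with hil | hij
        · exact hlL hil
        · have : i = j := hij
          exact this ▸ hjL
      -- b + v + g ∈ T
      have hbvg : b + v + g ∈ T := by
        apply htL.2.1
        refine mem_vslice.mpr ⟨g₀ + ((fun i => if i ∈ l then (b + v) i else 0) + g), ?_, ?_⟩
        · intro i hi
          have hi' : (g₀ + ((fun i => if i ∈ l then (b + v) i else 0) + g)) i ≠ 0 := hi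
          by_contra hiL
          have h1' : g₀ i = 0 := vsupp_subset_iff.mp hg₀ i hiL
          have h3' : g i = 0 := vsupp_subset_iff.mp hgL i hiL
          have hil : i ∉ l := fun h => hiL (hlL h)
          simp only [Pi.add_apply, h1', h3', if_neg hil] at hi'
          exact hi' rfl
        · funext i
          have h1' := congrFun hβeq i
          simp only [Pi.add_apply] at h1' ⊢
          by_cases hil : i ∈ l
          · simp only [hβ, Pi.add_apply, if_pos hil] at h1' ⊢
            omega
          · simp only [hβ, Pi.add_apply, if_neg hil] at h1' ⊢
            omega
      have havg : a + v + g ∈ T := moveII h2 hbstar hastarT hq.symm g hbvg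
      refine h1 (a + v + g) (r'' + g) (fun i => ?_) havg
      simp only [Pi.add_apply]
      have hav_i := congrFun hav i
      simp only [Pi.add_apply] at hav_i
      by_cases hij : i = j
      · simp only [hr'', if_pos hij]
        omega
      · simp only [hr'', if_neg hij]
        have : r' i ≤ a i + v i := by omega
        omega
    have hslsub : vslice r' l ⊆ vslice r'' (l ∪ {j}) := by
      rintro x ⟨c₁, hc₁, rfl⟩
      refine mem_vslice.mpr ⟨c₁ + (fun i => if i = j then r' j else 0), ?_, ?_⟩
      · intro i hi
        have hi' : (c₁ + (fun i => if i = j then r' j else 0)) i ≠ 0 := hi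
        by_cases hij : i = j
        · exact Or.inr hij
        · left
          apply hc₁
          intro h0
          simp only [Pi.add_apply, h0, if_neg hij] at hi'
          exact hi' rfl
      · funext i
        by_cases hij : i = j
        · subst hij
          simp [hr'']
          omega
        · simp [hr'', hij]
    have heq := hstd.2.2 r'' (l ∪ {j}) hd'' hsub'' hslsub
    have hbad : r'' + (fun i => if i = j then r' j + 1 else 0) ∈ vslice r' l := by
      rw [heq]
      refine mem_vslice.mpr ⟨_, ?_, rfl⟩
      intro i hi
      have hi' : (fun i => if i = j then r' j + 1 else 0) i ≠ 0 := hi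
      by_cases hij : i = j
      · exact Or.inr hij
      · simp [hij] at hi'
    obtain ⟨c₂, hc₂, hEq⟩ := mem_vslice.mp hbad
    have hc₂j : c₂ j = 0 := vsupp_subset_iff.mp hc₂ j hjl
    have := congrFun hEq j
    simp [hc₂j, hr''] at this

end Stmt4Aux

/-- Under properties (i) and (ii), if the fiber of the closure T̄(ℓ)
over q is nonempty then it equals T_q; in particular T̄(ℓ) is a union of whole
fibers. -/
theorem stmt_4 {n : ℕ} (K : AddSubgroup (Fin n → ℤ)) (T : Set (Fin n → ℕ))
    (h1 : DownClosed T) (h2 : PropII K T) (l : Set (Fin n)) :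
    (∀ q : (Fin n → ℤ) ⧸ K, (fiber K (Tlbar T l) q).Nonempty →
        fiber K (Tlbar T l) q = fiber K T q) ∧
      Tlbar T l = ⋃ q ∈ {q : (Fin n → ℤ) ⧸ K | (fiber K (Tlbar T l) q).Nonempty},
        fiber K T q := by
  classical
  have hsubT : Tlbar T l ⊆ T := by
    rintro x ⟨r, r', hle, hstd, hx⟩
    obtain ⟨c, hc, rfl⟩ := mem_vslice.mp hx
    refine h1 (r' + c) (r + c) (fun i => ?_) (hstd.2.1 (mem_vslice.mpr ⟨c, hc, rfl⟩))
    exact Nat.add_le_add_right (hle i) (c i)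
  have part1 : ∀ q : (Fin n → ℤ) ⧸ K, (fiber K (Tlbar T l) q).Nonempty →
      fiber K (Tlbar T l) q = fiber K T q := by
    rintro q ⟨a, haTl, haq⟩
    ext x
    constructor
    · rintro ⟨hx, hxq⟩
      exact ⟨hsubT hx, hxq⟩
    · rintro ⟨hx, hxq⟩
      exact ⟨tlbar_key h1 h2 l haTl hx (haq.trans hxq.symm), hxq⟩
  refine ⟨part1, ?_⟩
  ext x
  simp only [Set.mem_iUnion, Set.mem_setOf_eq, exists_prop]
  constructor
  · intro hx
    exact ⟨QuotientAddGroup.mk (vtoZ x), ⟨x, hx, rfl⟩, hsubT hx, rfl⟩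
  · rintro ⟨q, hne, hxmem⟩
    rw [← part1 q hne] at hxmem
    exact hxmem.1
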